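/- If a point (C,Q,E) of the unit resource achievable region satisfies C ≥ 0 and Q ≥ 0, then C = 0, Q = 0, and E ≤ 0. (In other words, the unit protocols can never simultaneously generate positive rates of classical and quantum communication; at best they consume entanglement.) -/

import Mathlib

/-!
The cone is cut out by the halfspaces `C + 2Q ≤ 0` and `C + Q + E ≤ 0`: on
`α • vTP + β • vSD + γ • vED` these functionals equal `-2γ` and `-2α`. With `C, Q ≥ 0` the
first forces `C = Q = 0`, and then the second gives `E ≤ 0`.
-/

/-- The teleportation vector. -/
def vTP : ℝ × ℝ × ℝ := (-2, 1, -1)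

/-- The super-dense coding vector. -/
def vSD : ℝ × ℝ × ℝ := (2, -1, -1)

/-- The entanglement distribution vector. -/
def vED : ℝ × ℝ × ℝ := (0, -1, 1)

/-- The unit resource achievable region. -/
def unitRegion : Set (ℝ × ℝ × ℝ) :=
  {p | ∃ α β γ : ℝ, 0 ≤ α ∧ 0 ≤ β ∧ 0 ≤ γ ∧ p = α • vTP + β • vSD + γ • vED}

theorem smul_vTP_add_smul_vSD_add_smul_vED (α β γ : ℝ) :
    α • vTP + β • vSD + γ • vED = (2 * (β - α), α - β - γ, γ - α - β) := by
  simp only [vTP, vSD, vED, Prod.smul_mk, smul_eq_mul, Prod.mk_add_mk, Prod.mk.injEq]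
  refine ⟨?_, ?_, ?_⟩ <;> ring

theorem mem_unitRegion_iff (p : ℝ × ℝ × ℝ) :
    p ∈ unitRegion ↔ ∃ α β γ : ℝ, 0 ≤ α ∧ 0 ≤ β ∧ 0 ≤ γ ∧
      p = (2 * (β - α), α - β - γ, γ - α - β) := by
  simp only [unitRegion, Set.mem_ofPred_eq, smul_vTP_add_smul_vSD_add_smul_vED]

theorem fst_add_two_mul_snd_fst_nonpos_of_mem_unitRegion {p : ℝ × ℝ × ℝ}
    (hp : p ∈ unitRegion) : p.1 + 2 * p.2.1 ≤ 0 := by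
  obtain ⟨α, β, γ, -, -, hγ, rfl⟩ := (mem_unitRegion_iff p).1 hp
  dsimp only
  linarith

theorem fst_add_snd_fst_add_snd_snd_nonpos_of_mem_unitRegion {p : ℝ × ℝ × ℝ}
    (hp : p ∈ unitRegion) : p.1 + p.2.1 + p.2.2 ≤ 0 := by
  obtain ⟨α, β, γ, hα, -, -, rfl⟩ := (mem_unitRegion_iff p).1 hp
  dsimp only
  linarith

/-- The unit protocols can never simultaneously generate positive rates of
classical and quantum communication; at best they consume entanglement. -/
theorem unit_region_no_cbits_and_qubits (p : ℝ × ℝ × ℝ)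
    (hp : p ∈ unitRegion) (hC : 0 ≤ p.1) (hQ : 0 ≤ p.2.1) :
    p.1 = 0 ∧ p.2.1 = 0 ∧ p.2.2 ≤ 0 := by
  have hCQ := fst_add_two_mul_snd_fst_nonpos_of_mem_unitRegion hp
  have hCQE := fst_add_snd_fst_add_snd_snd_nonpos_of_mem_unitRegion hp
  refine ⟨by linarith, by linarith, by linarith⟩
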